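/- Let M be a manifold, Φ a continuous flow on M, and x ∈ M a periodic point of Φ with period λ(x). Then x is quasi-regular and λ(x)·A_x = [C_x], where [C_x] is the integral homology class in H_1(M;ℝ) determined by the orbit of x under Φ. -/

import Mathlib

/-!
Every `t > 0` with `Φ_t x = x` is a period of `t ↦ u (Φ_t x)` for any continuous `u` into a
Hausdorff space. Periods of a continuous function form a closed subgroup of `ℝ`, so
`λ(x) = inf {t > 0 : Φ_t x = x}` is again a period, and if `λ(x) = 0` the subgroup is dense,
hence everything, and `u` is constant along the orbit. Time averages of a `c`-periodic function
converge to its mean over one period, because its primitive differs from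
the linear function `T ↦ (T / c) ∫₀ᶜ` by a continuous periodic, hence bounded, function. Applied
to `g` and to `Im (f' / f)` along the orbit this gives both claims.
-/

open Filter Topology Function MeasureTheory Set

namespace Function

variable {α X : Type*}

def periodAddSubgroup [AddGroup α] (ψ : α → X) : AddSubgroup α where
  carrier := {c | Periodic ψ c}
  zero_mem' := fun t => by rw [add_zero]
  add_mem' := Periodic.add_period
  neg_mem' := Periodic.neg

theorem isClosed_periodAddSubgroup [AddGroup α] [TopologicalSpace α] [ContinuousAdd α]
    [TopologicalSpace X] [T2Space X] {ψ : α → X} (hψ : Continuous ψ) :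
    IsClosed (periodAddSubgroup ψ : Set α) := by
  change IsClosed {c | ∀ t, ψ (t + c) = ψ t}
  rw [ofPred_forall]
  exact isClosed_iInter fun t =>
    isClosed_eq (hψ.comp (continuous_const.add continuous_id)) continuous_const

variable [TopologicalSpace X] [T2Space X] {ψ : ℝ → X}

theorem _root_.Continuous.periodic_sInf (hψ : Continuous ψ) {S : Set ℝ} (hS : S.Nonempty)
    (hS_bdd : BddBelow S) (hper : ∀ c ∈ S, Periodic ψ c) : Periodic ψ (sInf S) :=
  closure_minimal hper (isClosed_periodAddSubgroup hψ) (csInf_mem_closure hS hS_bdd)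

theorem apply_eq_apply_zero_of_small_periods (hψ : Continuous ψ)
    (hsmall : ∀ ε > 0, ∃ c ∈ Ioo 0 ε, Periodic ψ c) (t : ℝ) : ψ t = ψ 0 := by
  have hdense : Dense (periodAddSubgroup ψ : Set ℝ) :=
    AddSubgroup.dense_of_not_isolated_zero _ fun ε hε =>
      (hsmall ε hε).imp fun c ⟨hc, hper⟩ => ⟨hper, hc⟩
  have ht : t ∈ periodAddSubgroup ψ := by
    rw [← SetLike.mem_coe, ← (isClosed_periodAddSubgroup hψ).closure_eq, hdense.closure_eq]
    trivial
  simpa using ht 0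

end Function

theorem Function.Periodic.deriv {𝕜 F : Type*} [NontriviallyNormedField 𝕜] [NormedAddCommGroup F]
    [NormedSpace 𝕜 F] {f : 𝕜 → F} {c : 𝕜} (hf : Periodic f c) : Periodic (deriv f) c :=
  fun t => by rw [← deriv_comp_add_const, hf.funext]

theorem Function.Periodic.tendsto_inv_smul_intervalIntegral {E : Type*} [NormedAddCommGroup E]
    [NormedSpace ℝ E] {g : ℝ → E} {c : ℝ} (hg : Periodic g c) (hc : 0 < c) :
    Tendsto (fun T => T⁻¹ • ∫ t in 0..T, g t) atTop (𝓝 (c⁻¹ • ∫ t in 0..c, g t)) := by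
  by_cases hint : IntervalIntegrable g volume 0 c
  swap
  · rw [intervalIntegral.integral_undef hint, smul_zero]
    refine tendsto_const_nhds.congr' ?_
    filter_upwards [eventually_ge_atTop c] with T hT
    rw [intervalIntegral.integral_undef fun h => hint (h.mono_set ?_), smul_zero]
    exact uIcc_subset_uIcc_left (mem_uIcc.2 (Or.inl ⟨hc.le, hT⟩))
  have hint' := hg.intervalIntegrable₀ hc.ne' hint
  set I := ∫ t in 0..c, g t
  set R := fun T => (∫ t in 0..T, g t) - (T / c) • I
  have hR_per : Periodic R c := fun T => by
    simp only [R, hg.intervalIntegral_add_eq_add 0 T hint', zero_add, add_div, div_self hc.ne',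
      add_smul, one_smul, I]
    abel
  have hR_cont : Continuous R :=
    (intervalIntegral.continuous_primitive hint' 0).sub
      ((continuous_id.div_const c).smul continuous_const)
  obtain ⟨C, hC⟩ := (hR_per.isBounded_of_continuous hc.ne' hR_cont).exists_norm_le
  have hR_avg : Tendsto (fun T => T⁻¹ • R T) atTop (𝓝 0) :=
    tendsto_inv_atTop_zero.zero_smul_isBoundedUnder_le
      (isBoundedUnder_of_eventually_le (Eventually.of_forall fun T => hC _ ⟨T, rfl⟩))
  refine (zero_add (c⁻¹ • I) ▸ hR_avg.add_const (c⁻¹ • I)).congr' ?_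
  filter_upwards [eventually_ne_atTop 0] with T hT
  simp only [R, smul_sub, smul_smul]
  rw [← mul_div_assoc, inv_mul_cancel₀ hT, one_div, sub_add_cancel]

theorem periodic_comp_orbit {M X : Type*} {Φ : ℝ → M → M} {x : M}
    (hΦadd : ∀ s t x, Φ (s + t) x = Φ s (Φ t x)) {a : ℝ} (ha : Φ a x = x) (u : M → X) :
    Periodic (fun t => u (Φ t x)) a :=
  fun t => by simp only [hΦadd, ha]

theorem continuous_comp_orbit {M X : Type*} [TopologicalSpace M] [TopologicalSpace X]
    {Φ : ℝ → M → M} (hΦc : Continuous fun q : ℝ × M => Φ q.1 q.2) {x : M} {u : M → X}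
    (hu : Continuous u) : Continuous fun t => u (Φ t x) :=
  hu.comp (hΦc.comp (continuous_id.prodMk continuous_const))

section Flow

variable {M X : Type*} [TopologicalSpace M] [TopologicalSpace X] [T2Space X] {Φ : ℝ → M → M}
  {x : M} (hΦc : Continuous fun q : ℝ × M => Φ q.1 q.2)
  (hΦadd : ∀ s t x, Φ (s + t) x = Φ s (Φ t x)) (hper : ∃ t : ℝ, 0 < t ∧ Φ t x = x)
  {u : M → X} (hu : Continuous u)
include hΦc hΦadd hper hu

theorem periodic_comp_orbit_sInf :
    Periodic (fun t => u (Φ t x)) (sInf {t : ℝ | 0 < t ∧ Φ t x = x}) :=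
  (continuous_comp_orbit hΦc hu).periodic_sInf hper ⟨0, fun _ ht => ht.1.le⟩
    fun _ ha => periodic_comp_orbit hΦadd ha.2 u

theorem comp_orbit_eq_of_sInf_eq_zero (h0 : sInf {t : ℝ | 0 < t ∧ Φ t x = x} = 0) (t : ℝ) :
    u (Φ t x) = u (Φ 0 x) := by
  refine apply_eq_apply_zero_of_small_periods (continuous_comp_orbit hΦc hu) (fun ε hε => ?_) t
  obtain ⟨a, ha, haε⟩ := (csInf_lt_iff ⟨0, fun _ ht => ht.1.le⟩ hper).1 (h0 ▸ hε)
  exact ⟨a, ⟨ha.1, haε⟩, periodic_comp_orbit hΦadd ha.2 u⟩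

end Flow

theorem statement4_general {M : Type} [TopologicalSpace M]
    (Φ : ℝ → M → M) (hΦc : Continuous fun q : ℝ × M => Φ q.1 q.2)
    (hΦadd : ∀ s t x, Φ (s + t) x = Φ s (Φ t x))
    (x : M)
    (hper : ∃ t : ℝ, 0 < t ∧ Φ t x = x)
    (lam : ℝ) (hlam : lam = sInf {t : ℝ | 0 < t ∧ Φ t x = x}) :
    (∀ g : M → ℝ, Continuous g → ∃ L : ℝ,
        Tendsto (fun T : ℝ => (1 / T) * ∫ t in (0:ℝ)..T, g (Φ t x))
          atTop (nhds L)) ∧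
    (∀ f : M → ℂ, Continuous f → (∀ y, ‖f y‖ = 1) →
        Differentiable ℝ (fun t : ℝ => f (Φ t x)) →
        Tendsto
          (fun T : ℝ => (1 / (2 * Real.pi * T)) *
            ∫ t in (0:ℝ)..T, (deriv (fun s : ℝ => f (Φ s x)) t / f (Φ t x)).im)
          atTop
          (nhds ((1 / lam) * ((1 / (2 * Real.pi)) *
            ∫ t in (0:ℝ)..lam, (deriv (fun s : ℝ => f (Φ s x)) t / f (Φ t x)).im)))) := by
  refine ⟨fun g hg => ?_, fun f hf _ _ => ?_⟩
  · obtain ⟨a, ha_pos, ha⟩ := hper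
    exact ⟨_, by simpa only [one_div, smul_eq_mul] using
      (periodic_comp_orbit hΦadd ha g).tendsto_inv_smul_intervalIntegral ha_pos⟩
  set ψ := fun t => f (Φ t x)
  have hψ : Periodic ψ lam := hlam ▸ periodic_comp_orbit_sInf hΦc hΦadd hper hf
  rcases (hlam ▸ le_csInf hper fun _ ht => ht.1.le : 0 ≤ lam).eq_or_lt with h0 | hpos
  · have hψ' : deriv ψ = 0 := by
      have hψ_const : ψ = fun _ => ψ 0 :=
        funext (comp_orbit_eq_of_sInf_eq_zero hΦc hΦadd hper hf (hlam ▸ h0.symm))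
      rw [hψ_const]
      exact deriv_const' _
    simp only [hψ', Pi.zero_apply, zero_div, Complex.zero_im, intervalIntegral.integral_zero,
      mul_zero]
    exact tendsto_const_nhds
  · have hG : Periodic (fun t => (deriv ψ t / ψ t).im) lam := (hψ.deriv.div hψ).comp Complex.im
    convert (hG.tendsto_inv_smul_intervalIntegral hpos).const_mul (1 / (2 * Real.pi)) using 2
    · simp only [smul_eq_mul]; ring
    · simp only [smul_eq_mul]; ring

/-- Let `M` be a manifold, `Φ` a continuous flow on `M`, and `x ∈ M` a
periodic point of `Φ` with (minimal) period `λ(x) = inf {t > 0 : Φ_t(x) = x}`.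
Then:
* `x` is quasi-regular: for every continuous `g : M → ℝ` the time average
  `(1/T) ∫₀ᵀ g(Φ_t(x)) dt` converges as `T → ∞`; and
* `λ(x) · A_x = [C_x]`: for every smooth `f : M → S¹` (realized as a continuous
  `f : M → ℂ` of unit norm, differentiable along the orbit of `x`), the asymptotic
  cycle `A_x[f] = lim_{T→∞} (1/(2πiT)) ∫₀ᵀ f'(Φ_t(x))/f(Φ_t(x)) dt` exists and
  `λ(x) · A_x[f]` equals the pairing `[C_x]([f]) = ∫_{C_x} ω_f =
  (1/(2πi)) ∫₀^{λ(x)} f'(Φ_t(x))/f(Φ_t(x)) dt` of `[f]` with the integral homology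
  class determined by the orbit of `x`.  (Since `f'/f` is purely imaginary, these
  expressions are written below via `(1/2π)·Im(f'/f)`.) -/
theorem statement4 {M : Type} [TopologicalSpace M]
    (Φ : ℝ → M → M) (hΦc : Continuous fun q : ℝ × M => Φ q.1 q.2)
    (hΦ0 : ∀ x, Φ 0 x = x) (hΦadd : ∀ s t x, Φ (s + t) x = Φ s (Φ t x))
    (x : M)
    (hper : ∃ t : ℝ, 0 < t ∧ Φ t x = x)
    (lam : ℝ) (hlam : lam = sInf {t : ℝ | 0 < t ∧ Φ t x = x}) :
    (∀ g : M → ℝ, Continuous g → ∃ L : ℝ,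
        Tendsto (fun T : ℝ => (1 / T) * ∫ t in (0:ℝ)..T, g (Φ t x))
          atTop (nhds L)) ∧
    (∀ f : M → ℂ, Continuous f → (∀ y, ‖f y‖ = 1) →
        Differentiable ℝ (fun t : ℝ => f (Φ t x)) →
        Tendsto
          (fun T : ℝ => (1 / (2 * Real.pi * T)) *
            ∫ t in (0:ℝ)..T, (deriv (fun s : ℝ => f (Φ s x)) t / f (Φ t x)).im)
          atTop
          (nhds ((1 / lam) * ((1 / (2 * Real.pi)) *
            ∫ t in (0:ℝ)..lam, (deriv (fun s : ℝ => f (Φ s x)) t / f (Φ t x)).im)))) :=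
  statement4_general Φ hΦc hΦadd x hper lam hlam
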